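/- Let (S,+) be a commutative semigroup and let C be a central subset of S. Then there exist functions α : P_f(S^ℕ) → S and H : P_f(S^ℕ) → P_f(ℕ) such that: (1) if F, G ∈ P_f(S^ℕ) and F ⊊ G, then max H(F) < min H(G); and (2) if m ∈ ℕ, G_1 ⊊ G_2 ⊊ … ⊊ G_m are members of P_f(S^ℕ), and for each i ∈ {1,…,m}, ⟨y_{i,n}⟩_{n=1}^∞ ∈ G_i, then Σ_{i=1}^{m} (α(G_i) + Σ_{t∈H(G_i)} y_{i,t}) ∈ C. -/

import Mathlib

/-!
Members of a minimal idempotent `p ∈ K(βS)` are J-sets: the ultrafilters all of whose members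
are J-sets form a two-sided ideal of `βS` (nonempty because J-sets are partition regular, by the
Hales–Jewett theorem), so they contain `K(βS)`. For idempotent `p` the set
`C⋆ = {x ∈ C | -x + C ∈ p}` belongs to `p` and `-x + C⋆ ∈ p` for `x ∈ C⋆`. Now choose `α(F)`,
`H(F)` by recursion along `⊊`: the finitely many sums of chains ending strictly below `F` lie in
`C⋆`, so `C⋆` intersected with `-d + C⋆` over these sums `d` is in `p`, and its J-set property,
applied beyond `max H(G)` for `G ⊊ F`, yields `α(F)` and `H(F)`.
-/

open scoped Classical

namespace TotalSG

/-- the extension of `+` to `βS`: `A ∈ p+q ↔ {x : -x+A ∈ q} ∈ p`. -/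
def uadd {S : Type} [Add S] (p q : Ultrafilter S) : Ultrafilter S :=
  p.bind fun x => q.map fun y => x + y

/-- a two-sided ideal of `(βS,+)`. -/
def IsIdeal {S : Type} [Add S] (I : Set (Ultrafilter S)) : Prop :=
  I.Nonempty ∧ (∀ p : Ultrafilter S, ∀ q ∈ I, uadd p q ∈ I) ∧
    (∀ q ∈ I, ∀ p : Ultrafilter S, uadd q p ∈ I)

/-- `K(βS)`, the smallest two-sided ideal of `βS` (= the intersection of all two-sided
ideals). -/
def KSet (S : Type) [Add S] : Set (Ultrafilter S) := ⋂₀ {I | IsIdeal I}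

/-- `C ⊆ S` is central: it belongs to some idempotent ultrafilter in `K(βS)`. -/
def IsCentral {S : Type} [Add S] (C : Set S) : Prop :=
  ∃ p : Ultrafilter S, uadd p p = p ∧ p ∈ KSet S ∧ C ∈ p

/-- addition on `Option S`, with `none` the formal empty sum. -/
def oadd {S : Type} [Add S] : Option S → Option S → Option S
  | none, y => y
  | some a, none => some a
  | some a, some b => some (a + b)

/-- sum of a list of (optional) terms; `none` iff there are no terms. -/
def osumO {S : Type} [Add S] (l : List (Option S)) : Option S := l.foldr oadd none

/-- `Σ_{t ∈ H} f(t)` (in increasing order of indices); `none` iff `H = ∅`. -/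
def osumF {S : Type} [Add S] (f : ℕ → S) (H : Finset ℕ) : Option S :=
  osumO ((H.sort (· ≤ ·)).map fun t => some (f t))

/-- `A ⊆ S` is a J-set: for every `F ∈ P_f(S^ℕ)` there are `a ∈ S` and `H ∈ P_f(ℕ)` with
`a + Σ_{t ∈ H} f(t) ∈ A` for every `f ∈ F`. -/
def IsJSet {S : Type} [Add S] (A : Set S) : Prop :=
  ∀ F : Finset (ℕ → S), F.Nonempty →
    ∃ (a : S) (H : Finset ℕ), H.Nonempty ∧
      ∀ f ∈ F, ∃ x : S, osumF f H = some x ∧ a + x ∈ A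

end TotalSG

namespace TotalSG

section

variable {S : Type} [Add S]

lemma mem_uadd {A : Set S} {p q : Ultrafilter S} :
    A ∈ uadd p q ↔ {x | (x + ·) ⁻¹' A ∈ q} ∈ p := by
  rw [← Ultrafilter.mem_coe]
  exact Filter.mem_bind'

variable (S) in
def jUltrafilters : Set (Ultrafilter S) := {q | ∀ A ∈ q, IsJSet A}

def starSet (p : Ultrafilter S) (C : Set S) : Set S := {x ∈ C | (x + ·) ⁻¹' C ∈ p}

lemma starSet_subset (p : Ultrafilter S) (C : Set S) : starSet p C ⊆ C := fun _ hx => hx.1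

lemma starSet_mem {p : Ultrafilter S} {C : Set S} (hp : uadd p p = p) (hC : C ∈ p) :
    starSet p C ∈ p :=
  Filter.inter_mem hC (mem_uadd.1 (hp.symm ▸ hC))

end

lemma preimage_add_starSet_mem {S : Type} [AddSemigroup S] {p : Ultrafilter S} {C : Set S}
    (hp : uadd p p = p) {x : S} (hx : x ∈ starSet p C) : (x + ·) ⁻¹' starSet p C ∈ p := by
  have h : {y | (y + ·) ⁻¹' ((x + ·) ⁻¹' C) ∈ p} ∈ p := mem_uadd.1 (hp.symm ▸ hx.2)
  refine Filter.inter_mem hx.2 (Filter.mem_of_superset h fun y hy => ?_)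
  show ((x + y) + ·) ⁻¹' C ∈ p
  simp_rw [add_assoc]
  exact hy

variable {S : Type} [AddCommSemigroup S]

/-- `Option S` with `oadd` is `WithZero S`, so `osumO` and `osumF` are sums in a commutative
monoid. -/
instance : AddCommMonoid (Option S) := inferInstanceAs (AddCommMonoid (WithZero S))

lemma some_add_some (a b : S) : (some a + some b : Option S) = some (a + b) := rfl

lemma oadd_eq_add (x y : Option S) : oadd x y = x + y := by
  cases x <;> cases y <;> rfl

lemma osumO_eq_sum (l : List (Option S)) : osumO l = l.sum := by
  induction l with
  | nil => rfl
  | cons x l ih => rw [List.sum_cons, ← ih, ← oadd_eq_add]; rfl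

lemma osumF_eq_sum (f : ℕ → S) (H : Finset ℕ) : osumF f H = ∑ t ∈ H, some (f t) := by
  rw [osumF, osumO_eq_sum, Finset.sum_eq_multiset_sum, ← Finset.sort_eq H (· ≤ ·),
    Multiset.map_coe, Multiset.sum_coe]

lemma exists_some_add_eq_some (a : S) (x : Option S) : ∃ b, some a + x = some b := by
  cases x with
  | none => exact ⟨a, rfl⟩
  | some c => exact ⟨a + c, rfl⟩

lemma exists_sum_some_eq_some {ι : Type*} {s : Finset ι} (hs : s.Nonempty)
    (g : ι → S) : ∃ x, ∑ i ∈ s, some (g i) = some x := by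
  induction hs using Finset.Nonempty.cons_induction with
  | singleton i => exact ⟨g i, Finset.sum_singleton _ _⟩
  | cons i s hi _ ih =>
    obtain ⟨x, hx⟩ := ih
    exact ⟨g i + x, by rw [Finset.sum_cons, hx, some_add_some]⟩

def shiftedSum (a : S) (H : Finset ℕ) (f : ℕ → S) : Option S := some a + ∑ t ∈ H, some (f t)

lemma some_add_shiftedSum (x a : S) (H : Finset ℕ) (f : ℕ → S) :
    some x + shiftedSum a H f = shiftedSum (x + a) H f := by
  rw [shiftedSum, shiftedSum, ← add_assoc, some_add_some]

lemma shiftedSum_add_some (a z : S) (H : Finset ℕ) (f : ℕ → S) :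
    shiftedSum a H f + some z = shiftedSum (a + z) H f := by
  rw [add_comm, some_add_shiftedSum, add_comm]

lemma shiftedSum_mem_image_iff {a : S} {f : ℕ → S} {H : Finset ℕ} (hH : H.Nonempty)
    {A : Set S} : shiftedSum a H f ∈ some '' A ↔ ∃ x, osumF f H = some x ∧ a + x ∈ A := by
  obtain ⟨x, hx⟩ := exists_sum_some_eq_some hH f
  simp [shiftedSum, osumF_eq_sum, hx, some_add_some]

lemma isJSet_iff {A : Set S} : IsJSet A ↔ ∀ F : Finset (ℕ → S), F.Nonempty →
    ∃ (a : S) (H : Finset ℕ), H.Nonempty ∧ ∀ f ∈ F, shiftedSum a H f ∈ some '' A := by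
  refine forall₂_congr fun F _ => exists_congr fun a => exists_congr fun H => ?_
  exact and_congr_right fun hH => forall₂_congr fun f _ => (shiftedSum_mem_image_iff hH).symm

lemma IsJSet.mono {A B : Set S} (hA : IsJSet A) (hAB : A ⊆ B) : IsJSet B := by
  rw [isJSet_iff] at hA ⊢
  intro F hF
  obtain ⟨a, H, hH, hA⟩ := hA F hF
  exact ⟨a, H, hH, fun f hf => Set.image_mono hAB (hA f hf)⟩

lemma isJSet_univ : IsJSet (Set.univ : Set S) := by
  rw [isJSet_iff]
  rintro F ⟨f, -⟩
  refine ⟨f 0, {0}, Finset.singleton_nonempty 0, fun g _ => ?_⟩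
  simp [shiftedSum, some_add_some]

lemma not_isJSet_empty [Nonempty S] : ¬ IsJSet (∅ : Set S) := by
  intro h
  obtain ⟨a, H, -, h⟩ :=
    isJSet_iff.1 h {fun _ => Classical.arbitrary S} (Finset.singleton_nonempty _)
  simpa using h _ (Finset.mem_singleton_self _)

/-- Apply the J-set property to the sequences shifted by `k + 1`, plus one extra sequence so that
the family is nonempty. -/
lemma IsJSet.exists_gt [Nonempty S] {A : Set S} (hA : IsJSet A) (F : Finset (ℕ → S)) (k : ℕ) :
    ∃ (a : S) (H : Finset ℕ), H.Nonempty ∧ (∀ t ∈ H, k < t) ∧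
      ∀ f ∈ F, shiftedSum a H f ∈ some '' A := by
  let shift : (ℕ → S) → ℕ → S := fun f t => f (t + (k + 1))
  obtain ⟨a, H, hH, hA⟩ := isJSet_iff.1 hA
    ((insert (fun _ => Classical.arbitrary S) F).image shift) ((Finset.insert_nonempty _ _).image _)
  refine ⟨a, H.image (· + (k + 1)), hH.image _, ?_, fun f hf => ?_⟩
  · simp only [Finset.forall_mem_image]
    omega
  rw [shiftedSum, Finset.sum_image fun _ _ _ _ => Nat.add_right_cancel]
  exact hA (shift f) (Finset.mem_image_of_mem _ (Finset.mem_insert_of_mem hf))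

open Combinatorics in
/-- The fixed coordinates of `l` contribute the constant `b`. -/
lemma exists_sum_line_eq {Λ ι : Type*} [Nonempty Λ] [Fintype ι] (φ : Λ → ℕ → S)
    {e : ℕ × ι → ℕ} (he : Function.Injective e) (l : Line Λ ι) (H : Finset ℕ) :
    ∃ b : Option S, ∀ x : Λ, ∑ t ∈ H, ∑ j, some (φ (l x j) (e (t, j))) =
      b + ∑ s ∈ (H ×ˢ Finset.univ.filter (l.idxFun · = none)).image e, some (φ x s) := by
  set M := Finset.univ.filter (l.idxFun · = none)
  refine ⟨∑ t ∈ H, ∑ j ∈ Mᶜ, some (φ (l (Classical.arbitrary Λ) j) (e (t, j))), fun x => ?_⟩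
  have hfixed : ∀ j ∈ Mᶜ, l x j = l (Classical.arbitrary Λ) j := by
    intro j hj
    obtain ⟨u, hu⟩ := Option.ne_none_iff_exists'.1 (by simpa [M] using hj)
    rw [Line.apply_some hu, Line.apply_some hu]
  have hmoving : ∀ j ∈ M, l x j = x := fun j hj => Line.apply_none _ _ _ (by simpa [M] using hj)
  rw [Finset.sum_image he.injOn, Finset.sum_product, ← Finset.sum_add_distrib]
  refine Finset.sum_congr rfl fun t _ => ?_
  rw [← Finset.sum_compl_add_sum M]
  congr 1
  · exact Finset.sum_congr rfl fun j hj => by rw [hfixed j hj]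
  · exact Finset.sum_congr rfl fun j hj => by rw [hmoving j hj]

lemma not_isJSet_iff {A : Set S} : ¬ IsJSet A ↔ ∃ F : Finset (ℕ → S), F.Nonempty ∧
    ∀ (a : S) (H : Finset ℕ), H.Nonempty → ∃ f ∈ F, shiftedSum a H f ∉ some '' A := by
  rw [isJSet_iff]
  push Not
  rfl

open Combinatorics in
/-- Partition regularity of J-sets. Given witnesses `F₁`, `F₂` against `A` and `B`, colour the
words `w : ι → F₁ ∪ F₂` of a Hales–Jewett dimension `ι` by the cell containing
`a + Σ_{t ∈ H} Σ_j w_j (e (t, j))`; a monochromatic line turns `a, H` into a witness for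
`A` or `B` that beats `F₁` or `F₂`. -/
theorem IsJSet.or_of_union {A B : Set S} (h : IsJSet (A ∪ B)) : IsJSet A ∨ IsJSet B := by
  by_contra! hAB
  obtain ⟨F₁, ⟨f₁, hf₁⟩, hA⟩ := not_isJSet_iff.1 hAB.1
  obtain ⟨F₂, -, hB⟩ := not_isJSet_iff.1 hAB.2
  let Λ := ↥(F₁ ∪ F₂)
  have : Nonempty Λ := ⟨⟨f₁, Finset.mem_union_left _ hf₁⟩⟩
  obtain ⟨ι, _, hHJ⟩ := Line.exists_mono_in_high_dimension Λ Bool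
  have : Nonempty ι := by
    obtain ⟨l, -⟩ := hHJ fun _ => true
    exact ⟨l.proper.choose⟩
  obtain ⟨e, he⟩ := Countable.exists_injective_nat (ℕ × ι)
  choose q hq using fun (w : ι → Λ) t =>
    exists_sum_some_eq_some Finset.univ_nonempty fun j => (w j).1 (e (t, j))
  obtain ⟨a, H, hH, hqAB⟩ := isJSet_iff.1 h (Finset.univ.image q) (Finset.univ_nonempty.image q)
  obtain ⟨l, c, hl⟩ := hHJ fun w => decide (shiftedSum a H (q w) ∈ some '' A)
  obtain ⟨b, hb⟩ := exists_sum_line_eq Subtype.val he l H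
  obtain ⟨a', ha'⟩ := exists_some_add_eq_some a b
  set H' := (H ×ˢ Finset.univ.filter (l.idxFun · = none)).image e
  have hH' : H'.Nonempty :=
    (hH.product ⟨l.proper.choose, by simpa using l.proper.choose_spec⟩).image e
  have hline : ∀ x : Λ, shiftedSum a H (q (l x)) = shiftedSum a' H' x.1 := by
    intro x
    simp_rw [shiftedSum, ← hq, hb, ← add_assoc, ha']
  cases c
  · obtain ⟨f, hf, hfB⟩ := hB a' H' hH'
    let x : Λ := ⟨f, Finset.mem_union_right _ hf⟩
    have hcol := hl x
    have hmem := hqAB _ (Finset.mem_image_of_mem q (Finset.mem_univ (l x)))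
    rw [Set.image_union, hline] at hmem
    rw [decide_eq_false_iff_not, hline] at hcol
    exact hfB (hmem.resolve_left hcol)
  · obtain ⟨f, hf, hfA⟩ := hA a' H' hH'
    have hcol := hl ⟨f, Finset.mem_union_left _ hf⟩
    rw [decide_eq_true_iff, hline] at hcol
    exact hfA hcol

/-- The sets with non-J-set complement form a proper filter, by partition regularity. -/
lemma jUltrafilters_nonempty [Nonempty S] : (jUltrafilters S).Nonempty := by
  let L : Filter S := Filter.comk (¬ IsJSet ·) not_isJSet_empty
    (fun _ ht _ hst hs => ht (hs.mono hst)) fun _ hs _ ht h => (h.or_of_union).elim hs ht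
  have : L.NeBot := Filter.neBot_iff.2 fun h => by
    have hempty : (∅ : Set S) ∈ L := h ▸ Filter.mem_bot
    exact Filter.mem_comk.1 hempty (Set.compl_empty.symm ▸ isJSet_univ)
  obtain ⟨q, hqL⟩ := Ultrafilter.exists_le L
  refine ⟨q, fun A hA => ?_⟩
  by_contra hAJ
  exact Ultrafilter.compl_notMem_iff.2 hA (hqL (Filter.mem_comk.2 (by rwa [compl_compl])))

lemma isIdeal_jUltrafilters [Nonempty S] : IsIdeal (jUltrafilters S) := by
  refine ⟨jUltrafilters_nonempty, fun p q hq A hA => ?_, fun q hq p A hA => ?_⟩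
  · obtain ⟨x, hx⟩ := Ultrafilter.nonempty_of_mem (mem_uadd.1 hA)
    have hJ := hq _ hx
    rw [isJSet_iff] at hJ ⊢
    intro F hF
    obtain ⟨a, H, hH, ha⟩ := hJ F hF
    refine ⟨x + a, H, hH, fun f hf => ?_⟩
    obtain ⟨y, hy, hya⟩ := ha f hf
    exact ⟨x + y, hy, by rw [← some_add_some, hya, some_add_shiftedSum]⟩
  · have hJ := hq _ (mem_uadd.1 hA)
    rw [isJSet_iff] at hJ ⊢
    intro F hF
    obtain ⟨a, H, hH, ha⟩ := hJ F hF
    choose! y hy hya using ha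
    have hD : (⋂ f ∈ F, (y f + ·) ⁻¹' A) ∈ p := (Filter.biInter_finset_mem F).2 hy
    obtain ⟨z, hz⟩ := Ultrafilter.nonempty_of_mem hD
    refine ⟨a + z, H, hH, fun f hf => ⟨y f + z, Set.mem_iInter₂.1 hz f hf, ?_⟩⟩
    rw [← some_add_some, hya f hf, shiftedSum_add_some]

lemma KSet_subset_jUltrafilters [Nonempty S] : KSet S ⊆ jUltrafilters S :=
  fun _ hp => Set.mem_sInter.1 hp _ isIdeal_jUltrafilters

/-- `a, H` extend the chains whose sums form `U` by one block drawn from `F`, beyond index `k`,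
keeping every new sum in `T`. -/
def IsAdmissibleStep (T : Set (Option S)) (U : Finset (Option S)) (k : ℕ)
    (F : Finset (ℕ → S)) (a : S) (H : Finset ℕ) : Prop :=
  H.Nonempty ∧ (∀ t ∈ H, k < t) ∧
    ∀ f ∈ F, shiftedSum a H f ∈ T ∧ ∀ d ∈ U, d ∈ T → d + shiftedSum a H f ∈ T

noncomputable def stepSums (U : Finset (Option S)) (F : Finset (ℕ → S)) (a : S) (H : Finset ℕ) :
    Finset (Option S) :=
  F.image (shiftedSum a H) ∪ (U ×ˢ F).image fun x => x.1 + shiftedSum a H x.2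

lemma stepSums_subset {T : Set (Option S)} {U : Finset (Option S)} {k : ℕ}
    {F : Finset (ℕ → S)} {a : S} {H : Finset ℕ} (hstep : IsAdmissibleStep T U k F a H)
    (hU : ↑U ⊆ T) : ↑(stepSums U F a H) ⊆ T := by
  intro x hx
  simp only [stepSums, Finset.coe_union, Finset.coe_image, Set.mem_union, Set.mem_image,
    Finset.mem_coe, Finset.mem_product] at hx
  rcases hx with ⟨f, hf, rfl⟩ | ⟨⟨d, f⟩, ⟨hd, hf⟩, rfl⟩
  · exact (hstep.2.2 f hf).1
  · exact (hstep.2.2 f hf).2 d hd (hU hd)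

lemma exists_isAdmissibleStep {p : Ultrafilter S} (hp : p ∈ jUltrafilters S) {D : Set S}
    (hD : D ∈ p) (hDadd : ∀ x ∈ D, (x + ·) ⁻¹' D ∈ p) (U : Finset (Option S)) (k : ℕ)
    (F : Finset (ℕ → S)) : ∃ a H, IsAdmissibleStep (some '' D) U k F a H := by
  have : Nonempty S := ⟨(Ultrafilter.nonempty_of_mem hD).some⟩
  let E := D ∩ ⋂ d ∈ U, {y | d ∈ some '' D → d + some y ∈ some '' D}
  have hE : E ∈ p := by
    refine Filter.inter_mem hD ((Filter.biInter_finset_mem U).2 fun d _ => ?_)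
    by_cases hd : d ∈ some '' D
    · obtain ⟨x, hx, rfl⟩ := hd
      exact Filter.mem_of_superset (hDadd x hx) fun y hy _ => ⟨x + y, hy, rfl⟩
    · exact Filter.univ_mem' fun y hd' => absurd hd' hd
  obtain ⟨a, H, hH, hk, hF⟩ := (hp E hE).exists_gt F k
  refine ⟨a, H, hH, hk, fun f hf => ?_⟩
  obtain ⟨z, ⟨hzD, hzU⟩, hz⟩ := hF f hf
  rw [← hz]
  exact ⟨⟨z, hzD, rfl⟩, fun d hd hdD => Set.mem_iInter₂.1 hzU d hd hdD⟩

/-- The data attached to a finite family `F`: `α(F)`, `H(F)`, and the finite set of sums of all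
chains ending at `F`. -/
structure ChainData (S : Type) where
  shift : S
  support : Finset ℕ
  sums : Finset (Option S)

section Construction

variable {T : Set (Option S)} (hstep : ∀ U k F, ∃ a H, IsAdmissibleStep T U k F a H)

noncomputable def extendChains (U : Finset (Option S)) (k : ℕ) (F : Finset (ℕ → S)) :
    ChainData S :=
  let a := (hstep U k F).choose
  let H := (hstep U k F).choose_spec.choose
  ⟨a, H, stepSums U F a H⟩

lemma extendChains_spec (U : Finset (Option S)) (k : ℕ) (F : Finset (ℕ → S)) :
    IsAdmissibleStep T U k F (extendChains hstep U k F).shift (extendChains hstep U k F).support ∧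
      (extendChains hstep U k F).sums = stepSums U F (extendChains hstep U k F).shift
        (extendChains hstep U k F).support :=
  ⟨(hstep U k F).choose_spec.choose_spec, rfl⟩

noncomputable def chainData : Finset (ℕ → S) → ChainData S :=
  Finset.strongInduction fun F prev => extendChains hstep
    (F.ssubsets.attach.sup fun G => (prev G (Finset.mem_ssubsets.1 G.2)).sums)
    (F.ssubsets.attach.sup fun G => (prev G (Finset.mem_ssubsets.1 G.2)).support.sup id) F

noncomputable def lowerSums (F : Finset (ℕ → S)) : Finset (Option S) :=
  F.ssubsets.sup fun G => (chainData hstep G).sums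

noncomputable def lowerBound (F : Finset (ℕ → S)) : ℕ :=
  F.ssubsets.sup fun G => (chainData hstep G).support.sup id

lemma chainData_eq (F : Finset (ℕ → S)) :
    chainData hstep F = extendChains hstep (lowerSums hstep F) (lowerBound hstep F) F := by
  rw [chainData, Finset.strongInduction_eq]
  exact congrArg₂ (extendChains hstep · · F)
    (Finset.sup_attach F.ssubsets fun G => (chainData hstep G).sums)
    (Finset.sup_attach F.ssubsets fun G => (chainData hstep G).support.sup id)

lemma chainData_spec (F : Finset (ℕ → S)) :
    IsAdmissibleStep T (lowerSums hstep F) (lowerBound hstep F) F (chainData hstep F).shift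
      (chainData hstep F).support ∧
    (chainData hstep F).sums = stepSums (lowerSums hstep F) F (chainData hstep F).shift
      (chainData hstep F).support := by
  rw [chainData_eq]
  exact extendChains_spec hstep _ _ F

lemma support_lt_support {F G : Finset (ℕ → S)} (hFG : F ⊂ G) {x y : ℕ}
    (hx : x ∈ (chainData hstep F).support) (hy : y ∈ (chainData hstep G).support) : x < y :=
  calc x ≤ (chainData hstep F).support.sup id := Finset.le_sup (f := id) hx
    _ ≤ lowerBound hstep G := Finset.le_sup (f := fun F => (chainData hstep F).support.sup id)
          (Finset.mem_ssubsets.2 hFG)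
    _ < y := (chainData_spec hstep G).1.2.1 y hy

lemma sums_subset (F : Finset (ℕ → S)) : ↑(chainData hstep F).sums ⊆ T := by
  induction F using Finset.strongInduction with
  | H F ih =>
    rw [(chainData_spec hstep F).2]
    refine stepSums_subset (chainData_spec hstep F).1 fun d hd => ?_
    obtain ⟨G, hG, hdG⟩ := Finset.mem_sup.1 (Finset.mem_coe.1 hd)
    exact ih G (Finset.mem_ssubsets.1 hG) hdG

lemma sum_chain_mem_sums (m : ℕ) (G : Fin (m + 1) → Finset (ℕ → S))
    (hG : ∀ i j, i < j → G i ⊂ G j) (f : Fin (m + 1) → ℕ → S) (hf : ∀ i, f i ∈ G i) :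
    ∑ i, shiftedSum (chainData hstep (G i)).shift (chainData hstep (G i)).support (f i) ∈
      (chainData hstep (G (Fin.last m))).sums := by
  induction m with
  | zero =>
    rw [Fin.sum_univ_one, (chainData_spec hstep _).2, stepSums]
    exact Finset.mem_union_left _ (Finset.mem_image_of_mem _ (hf 0))
  | succ m ih =>
    have hlast := ih (fun i => G i.castSucc)
      (fun i j hij => hG _ _ (Fin.castSucc_lt_castSucc_iff.2 hij)) (fun i => f i.castSucc)
      fun i => hf _
    have hlower : G (Fin.last m).castSucc ⊂ G (Fin.last (m + 1)) := hG _ _ (Fin.castSucc_lt_last _)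
    rw [Fin.sum_univ_castSucc, (chainData_spec hstep _).2, stepSums]
    refine Finset.mem_union_right _ (Finset.mem_image.2 ⟨(_, f (Fin.last (m + 1))), ?_, rfl⟩)
    exact Finset.mem_product.2 ⟨Finset.mem_sup.2 ⟨_, Finset.mem_ssubsets.2 hlower, hlast⟩, hf _⟩

theorem exists_chainSums_mem (hstep : ∀ U k F, ∃ a H, IsAdmissibleStep T U k F a H) :
    ∃ (α : Finset (ℕ → S) → S) (H : Finset (ℕ → S) → Finset ℕ), (∀ F, (H F).Nonempty) ∧
      (∀ F G, F ⊂ G → ∀ x ∈ H F, ∀ y ∈ H G, x < y) ∧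
      ∀ m (G : Fin (m + 1) → Finset (ℕ → S)), (∀ i j, i < j → G i ⊂ G j) →
        ∀ f : Fin (m + 1) → ℕ → S, (∀ i, f i ∈ G i) →
          ∑ i, shiftedSum (α (G i)) (H (G i)) (f i) ∈ T :=
  ⟨fun F => (chainData hstep F).shift, fun F => (chainData hstep F).support,
    fun F => (chainData_spec hstep F).1.1,
    fun _ _ hFG _ hx _ hy => support_lt_support hstep hFG hx hy,
    fun m G hG f hf => sums_subset hstep _ (sum_chain_mem_sums hstep m G hG f hf)⟩

end Construction

end TotalSG

open TotalSG in
/-- The stronger Central Sets Theorem of De, Hindman and Strauss for commutative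
semigroups. -/
theorem de_hindman_strauss_CST {S : Type} [AddCommSemigroup S]
    (C : Set S) (hC : IsCentral C) :
    ∃ (α : Finset (ℕ → S) → S) (H : Finset (ℕ → S) → Finset ℕ),
      (∀ F : Finset (ℕ → S), F.Nonempty → (H F).Nonempty) ∧
      (∀ F G : Finset (ℕ → S), F.Nonempty → F ⊂ G → ∀ x ∈ H F, ∀ y ∈ H G, x < y) ∧
      ∀ m : ℕ, ∀ hm : 0 < m, ∀ G : Fin m → Finset (ℕ → S),
        (∀ i, (G i).Nonempty) → (∀ i j : Fin m, i < j → G i ⊂ G j) →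
        ∀ f : Fin m → ℕ → S, (∀ i, f i ∈ G i) →
        ∃ c ∈ C,
          osumO (List.ofFn fun i : Fin m =>
            oadd (some (α (G i))) (osumF (f i) (H (G i)))) = some c := by
  obtain ⟨p, hp, hpK, hCp⟩ := hC
  have : Nonempty S := ⟨(Ultrafilter.nonempty_of_mem hCp).some⟩
  obtain ⟨α, H, hH, hsep, hsum⟩ := exists_chainSums_mem <|
    exists_isAdmissibleStep (KSet_subset_jUltrafilters hpK) (starSet_mem hp hCp)
      fun _ hx => preimage_add_starSet_mem hp hx
  refine ⟨α, H, fun F _ => hH F, fun F G _ => hsep F G, fun m hm G _ hG f hf => ?_⟩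
  obtain ⟨m, rfl⟩ := Nat.exists_eq_add_one_of_ne_zero hm.ne'
  obtain ⟨c, hc, hsum_eq⟩ := hsum m G hG f hf
  refine ⟨c, starSet_subset p C hc, ?_⟩
  simp only [osumO_eq_sum, List.sum_ofFn, oadd_eq_add, osumF_eq_sum]
  exact hsum_eq.symm
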